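/- arXiv:1503.05252 — 3 statements merged into one kernel-verified Lean document; each statement's English description precedes it below -/
import Mathlib

section
/- In the Klee-Walkup polyhedron realization Ũ₄ = {x ∈ ℝ⁴ : A x ≥ b}, there exists a circuit walk of length at most 4 from the vertex (1,1,8,8) to the vertex (0,0,0,0). -/
open Matrix

noncomputable section

/-- The polyhedron `{x ∈ ℝⁿ : A x ≥ b}`. -/
def polySet {m n : ℕ} (A : Matrix (Fin m) (Fin n) ℝ) (b : Fin m → ℝ) : Set (Fin n → ℝ) :=
  {x | ∀ i, b i ≤ A.mulVec x i}

/-- `g` is a circuit of `A`: `g` is nonzero and the support of `A g` is minimal with respect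
to inclusion among the supports of `A v` over all nonzero `v`. -/
def IsCircuit {m n : ℕ} (A : Matrix (Fin m) (Fin n) ℝ) (g : Fin n → ℝ) : Prop :=
  g ≠ 0 ∧ ∀ v : Fin n → ℝ, v ≠ 0 →
    {i | A.mulVec v i ≠ 0} ⊆ {i | A.mulVec g i ≠ 0} →
    {i | A.mulVec v i ≠ 0} = {i | A.mulVec g i ≠ 0}

/-- A circuit walk of length `k` from `u` to `v` in `{x : A x ≥ b}`: a sequence
`u = y⁰, …, yᵏ = v` of points of the polyhedron where each step is a maximal step
in a circuit direction. -/
def IsCircuitWalk {m n : ℕ} (A : Matrix (Fin m) (Fin n) ℝ) (b : Fin m → ℝ)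
    (k : ℕ) (u v : Fin n → ℝ) : Prop :=
  ∃ y : Fin (k + 1) → (Fin n → ℝ),
    y 0 = u ∧ y (Fin.last k) = v ∧ (∀ i, y i ∈ polySet A b) ∧
    ∀ i : Fin k, ∃ g : Fin n → ℝ, ∃ α : ℝ, IsCircuit A g ∧ 0 < α ∧
      y i.succ = y i.castSucc + α • g ∧
      ∀ β : ℝ, α < β → y i.castSucc + β • g ∉ polySet A b
/-- The constraint matrix of the Klee–Walkup polyhedron realization `Ũ₄`. -/
def kwA : Matrix (Fin 8) (Fin 4) ℝ :=
  !![-6, -3, 0, 1;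
     -3, -6, 1, 0;
     -35, -45, 6, 3;
     -45, -35, 3, 6;
     1, 0, 0, 0;
     0, 1, 0, 0;
     0, 0, 1, 0;
     0, 0, 0, 1]

/-- The right-hand side of the Klee–Walkup polyhedron realization `Ũ₄`. -/
def kwb : Fin 8 → ℝ := ![-1, -1, -8, -8, 0, 0, 0, 0]

@[simp] lemma kwCons_3_2 {α : Type*} (a : α) (s : Fin 2 → α) :
    Matrix.vecCons a s (2 : Fin 3) = s 1 := rfl
@[simp] lemma kwCons_4_2 {α : Type*} (a : α) (s : Fin 3 → α) :
    Matrix.vecCons a s (2 : Fin 4) = s 1 := rfl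
@[simp] lemma kwCons_4_3 {α : Type*} (a : α) (s : Fin 3 → α) :
    Matrix.vecCons a s (3 : Fin 4) = s 2 := rfl
@[simp] lemma kwCons_5_2 {α : Type*} (a : α) (s : Fin 4 → α) :
    Matrix.vecCons a s (2 : Fin 5) = s 1 := rfl
@[simp] lemma kwCons_5_3 {α : Type*} (a : α) (s : Fin 4 → α) :
    Matrix.vecCons a s (3 : Fin 5) = s 2 := rfl
@[simp] lemma kwCons_5_4 {α : Type*} (a : α) (s : Fin 4 → α) :
    Matrix.vecCons a s (4 : Fin 5) = s 3 := rfl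
@[simp] lemma kwCons_6_2 {α : Type*} (a : α) (s : Fin 5 → α) :
    Matrix.vecCons a s (2 : Fin 6) = s 1 := rfl
@[simp] lemma kwCons_6_3 {α : Type*} (a : α) (s : Fin 5 → α) :
    Matrix.vecCons a s (3 : Fin 6) = s 2 := rfl
@[simp] lemma kwCons_6_4 {α : Type*} (a : α) (s : Fin 5 → α) :
    Matrix.vecCons a s (4 : Fin 6) = s 3 := rfl
@[simp] lemma kwCons_6_5 {α : Type*} (a : α) (s : Fin 5 → α) :
    Matrix.vecCons a s (5 : Fin 6) = s 4 := rfl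
@[simp] lemma kwCons_7_2 {α : Type*} (a : α) (s : Fin 6 → α) :
    Matrix.vecCons a s (2 : Fin 7) = s 1 := rfl
@[simp] lemma kwCons_7_3 {α : Type*} (a : α) (s : Fin 6 → α) :
    Matrix.vecCons a s (3 : Fin 7) = s 2 := rfl
@[simp] lemma kwCons_7_4 {α : Type*} (a : α) (s : Fin 6 → α) :
    Matrix.vecCons a s (4 : Fin 7) = s 3 := rfl
@[simp] lemma kwCons_7_5 {α : Type*} (a : α) (s : Fin 6 → α) :
    Matrix.vecCons a s (5 : Fin 7) = s 4 := rfl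
@[simp] lemma kwCons_7_6 {α : Type*} (a : α) (s : Fin 6 → α) :
    Matrix.vecCons a s (6 : Fin 7) = s 5 := rfl
@[simp] lemma kwCons_8_2 {α : Type*} (a : α) (s : Fin 7 → α) :
    Matrix.vecCons a s (2 : Fin 8) = s 1 := rfl
@[simp] lemma kwCons_8_3 {α : Type*} (a : α) (s : Fin 7 → α) :
    Matrix.vecCons a s (3 : Fin 8) = s 2 := rfl
@[simp] lemma kwCons_8_4 {α : Type*} (a : α) (s : Fin 7 → α) :
    Matrix.vecCons a s (4 : Fin 8) = s 3 := rfl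
@[simp] lemma kwCons_8_5 {α : Type*} (a : α) (s : Fin 7 → α) :
    Matrix.vecCons a s (5 : Fin 8) = s 4 := rfl
@[simp] lemma kwCons_8_6 {α : Type*} (a : α) (s : Fin 7 → α) :
    Matrix.vecCons a s (6 : Fin 8) = s 5 := rfl
@[simp] lemma kwCons_8_7 {α : Type*} (a : α) (s : Fin 7 → α) :
    Matrix.vecCons a s (7 : Fin 8) = s 6 := rfl

lemma kw_mulVec (x : Fin 4 → ℝ) :
    kwA.mulVec x = ![-6*x 0-3*x 1+x 3, -3*x 0-6*x 1+x 2, -35*x 0-45*x 1+6*x 2+3*x 3,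
      -45*x 0-35*x 1+3*x 2+6*x 3, x 0, x 1, x 2, x 3] := by
  have h0 : kwA.mulVec x 0 = -6*x 0-3*x 1+x 3 := by
    simp only [Matrix.mulVec, dotProduct, Fin.sum_univ_four]
    rw [show kwA 0 0 = (-6:ℝ) from rfl, show kwA 0 1 = (-3:ℝ) from rfl, show kwA 0 2 = (0:ℝ) from rfl, show kwA 0 3 = (1:ℝ) from rfl]; ring
  have h1 : kwA.mulVec x 1 = -3*x 0-6*x 1+x 2 := by
    simp only [Matrix.mulVec, dotProduct, Fin.sum_univ_four]
    rw [show kwA 1 0 = (-3:ℝ) from rfl, show kwA 1 1 = (-6:ℝ) from rfl, show kwA 1 2 = (1:ℝ) from rfl, show kwA 1 3 = (0:ℝ) from rfl]; ring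
  have h2 : kwA.mulVec x 2 = -35*x 0-45*x 1+6*x 2+3*x 3 := by
    simp only [Matrix.mulVec, dotProduct, Fin.sum_univ_four]
    rw [show kwA 2 0 = (-35:ℝ) from rfl, show kwA 2 1 = (-45:ℝ) from rfl, show kwA 2 2 = (6:ℝ) from rfl, show kwA 2 3 = (3:ℝ) from rfl]; ring
  have h3 : kwA.mulVec x 3 = -45*x 0-35*x 1+3*x 2+6*x 3 := by
    simp only [Matrix.mulVec, dotProduct, Fin.sum_univ_four]
    rw [show kwA 3 0 = (-45:ℝ) from rfl, show kwA 3 1 = (-35:ℝ) from rfl, show kwA 3 2 = (3:ℝ) from rfl, show kwA 3 3 = (6:ℝ) from rfl]; ring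
  have h4 : kwA.mulVec x 4 = x 0 := by
    simp only [Matrix.mulVec, dotProduct, Fin.sum_univ_four]
    rw [show kwA 4 0 = (1:ℝ) from rfl, show kwA 4 1 = (0:ℝ) from rfl, show kwA 4 2 = (0:ℝ) from rfl, show kwA 4 3 = (0:ℝ) from rfl]; ring
  have h5 : kwA.mulVec x 5 = x 1 := by
    simp only [Matrix.mulVec, dotProduct, Fin.sum_univ_four]
    rw [show kwA 5 0 = (0:ℝ) from rfl, show kwA 5 1 = (1:ℝ) from rfl, show kwA 5 2 = (0:ℝ) from rfl, show kwA 5 3 = (0:ℝ) from rfl]; ring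
  have h6 : kwA.mulVec x 6 = x 2 := by
    simp only [Matrix.mulVec, dotProduct, Fin.sum_univ_four]
    rw [show kwA 6 0 = (0:ℝ) from rfl, show kwA 6 1 = (0:ℝ) from rfl, show kwA 6 2 = (1:ℝ) from rfl, show kwA 6 3 = (0:ℝ) from rfl]; ring
  have h7 : kwA.mulVec x 7 = x 3 := by
    simp only [Matrix.mulVec, dotProduct, Fin.sum_univ_four]
    rw [show kwA 7 0 = (0:ℝ) from rfl, show kwA 7 1 = (0:ℝ) from rfl, show kwA 7 2 = (0:ℝ) from rfl, show kwA 7 3 = (1:ℝ) from rfl]; ring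
  funext i
  fin_cases i
  exacts [h0, h1, h2, h3, h4, h5, h6, h7]

lemma kw_mem_iff (x : Fin 4 → ℝ) : x ∈ polySet kwA kwb ↔
    (-1 ≤ -6*x 0 - 3*x 1 + x 3 ∧ -1 ≤ -3*x 0 - 6*x 1 + x 2 ∧
     -8 ≤ -35*x 0 - 45*x 1 + 6*x 2 + 3*x 3 ∧ -8 ≤ -45*x 0 - 35*x 1 + 3*x 2 + 6*x 3 ∧
     0 ≤ x 0 ∧ 0 ≤ x 1 ∧ 0 ≤ x 2 ∧ 0 ≤ x 3) := by
  constructor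
  · intro h
    refine ⟨?_, ?_, ?_, ?_, ?_, ?_, ?_, ?_⟩
    · simpa [kw_mulVec, kwb] using h 0
    · simpa [kw_mulVec, kwb] using h 1
    · simpa [kw_mulVec, kwb] using h 2
    · simpa [kw_mulVec, kwb] using h 3
    · simpa [kw_mulVec, kwb] using h 4
    · simpa [kw_mulVec, kwb] using h 5
    · simpa [kw_mulVec, kwb] using h 6
    · simpa [kw_mulVec, kwb] using h 7
  · rintro ⟨h0,h1,h2,h3,h4,h5,h6,h7⟩ i
    rw [show (kwA.mulVec x) = _ from kw_mulVec x]
    fin_cases i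
    exacts [h0, h1, h2, h3, h4, h5, h6, h7]

lemma isCircuit_of (g : Fin 4 → ℝ) (hg : g ≠ 0)
    (h : ∀ v : Fin 4 → ℝ, (∀ i, kwA.mulVec g i = 0 → kwA.mulVec v i = 0) → ∃ c : ℝ, v = c • g) :
    IsCircuit kwA g := by
  refine ⟨hg, fun v hv hsub => ?_⟩
  obtain ⟨c, hc⟩ := h v (fun i hi => by
    by_contra hne
    exact hsub hne hi)
  have hc0 : c ≠ 0 := by
    rintro rfl
    simp at hc
    exact hv hc
  subst hc
  ext i
  simp [Matrix.mulVec_smul, hc0]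

lemma eq_of_combo {a c u w t : ℝ} (ha : 0 < a) (hc : 0 < c) (hac : a + c = 1)
    (hu : t ≤ u) (hw : t ≤ w) (h : a*u + c*w = t) : u = t ∧ w = t := by
  have key : a*t + c*t = t := by rw [← add_mul, hac, one_mul]
  have h1 : a * u = a * t := by
    nlinarith [mul_le_mul_of_nonneg_left hu ha.le, mul_le_mul_of_nonneg_left hw hc.le]
  have h2 : c * w = c * t := by linarith
  exact ⟨mul_left_cancel₀ ha.ne' h1, mul_left_cancel₀ hc.ne' h2⟩

lemma circ0 : IsCircuit kwA ![17, -9, 0, 75] := by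
  apply isCircuit_of
  · intro h; have := congrFun h 0; norm_num at this
  · intro v hv
    have e0 : -6*v 0-3*v 1+v 3 = 0 := by
      simpa [kw_mulVec] using hv 0 (by norm_num [kw_mulVec])
    have e3 : -45*v 0-35*v 1+3*v 2+6*v 3 = 0 := by
      simpa [kw_mulVec] using hv 3 (by norm_num [kw_mulVec])
    have e6 : v 2 = 0 := by
      simpa [kw_mulVec] using hv 6 (by norm_num [kw_mulVec])
    refine ⟨-v 1/9, ?_⟩
    funext j
    fin_cases j
    exacts [show v 0 = -v 1/9 * 17 by linarith,
      show v 1 = -v 1/9 * (-9) by linarith,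
      show v 2 = -v 1/9 * 0 by linarith,
      show v 3 = -v 1/9 * 75 by linarith]

lemma circ1 : IsCircuit kwA ![-1, 0, -3, -6] := by
  apply isCircuit_of
  · intro h; have := congrFun h 0; norm_num at this
  · intro v hv
    have e0 : -6*v 0-3*v 1+v 3 = 0 := by
      simpa [kw_mulVec] using hv 0 (by norm_num [kw_mulVec])
    have e1 : -3*v 0-6*v 1+v 2 = 0 := by
      simpa [kw_mulVec] using hv 1 (by norm_num [kw_mulVec])
    have e5 : v 1 = 0 := by
      simpa [kw_mulVec] using hv 5 (by norm_num [kw_mulVec])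
    refine ⟨-v 0, ?_⟩
    funext j
    fin_cases j
    exacts [show v 0 = -v 0 * (-1) by linarith,
      show v 1 = -v 0 * 0 by linarith,
      show v 2 = -v 0 * (-3) by linarith,
      show v 3 = -v 0 * (-6) by linarith]

lemma circ2 : IsCircuit kwA ![-1, 0, 0, -6] := by
  apply isCircuit_of
  · intro h; have := congrFun h 0; norm_num at this
  · intro v hv
    have e0 : -6*v 0-3*v 1+v 3 = 0 := by
      simpa [kw_mulVec] using hv 0 (by norm_num [kw_mulVec])
    have e5 : v 1 = 0 := by
      simpa [kw_mulVec] using hv 5 (by norm_num [kw_mulVec])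
    have e6 : v 2 = 0 := by
      simpa [kw_mulVec] using hv 6 (by norm_num [kw_mulVec])
    refine ⟨-v 0, ?_⟩
    funext j
    fin_cases j
    exacts [show v 0 = -v 0 * (-1) by linarith,
      show v 1 = -v 0 * 0 by linarith,
      show v 2 = -v 0 * 0 by linarith,
      show v 3 = -v 0 * (-6) by linarith]

lemma circ3 : IsCircuit kwA ![-1, 0, 0, 0] := by
  apply isCircuit_of
  · intro h; have := congrFun h 0; norm_num at this
  · intro v hv
    have e5 : v 1 = 0 := by
      simpa [kw_mulVec] using hv 5 (by norm_num [kw_mulVec])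
    have e6 : v 2 = 0 := by
      simpa [kw_mulVec] using hv 6 (by norm_num [kw_mulVec])
    have e7 : v 3 = 0 := by
      simpa [kw_mulVec] using hv 7 (by norm_num [kw_mulVec])
    refine ⟨-v 0, ?_⟩
    funext j
    fin_cases j
    exacts [show v 0 = -v 0 * (-1) by linarith,
      show v 1 = -v 0 * 0 by linarith,
      show v 2 = -v 0 * 0 by linarith,
      show v 3 = -v 0 * 0 by linarith]

/-- In the Klee–Walkup polyhedron realization `Ũ₄ = {x ∈ ℝ⁴ : A x ≥ b}`, there exists a
circuit walk of length at most 4 from the vertex `(1,1,8,8)` to the vertex `(0,0,0,0)`. -/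
theorem kw_circuit_walk_v_to_u :
    (![1, 1, 8, 8] : Fin 4 → ℝ) ∈ Set.extremePoints ℝ (polySet kwA kwb) ∧
    (![0, 0, 0, 0] : Fin 4 → ℝ) ∈ Set.extremePoints ℝ (polySet kwA kwb) ∧
    ∃ k ≤ 4, IsCircuitWalk kwA kwb k ![1, 1, 8, 8] ![0, 0, 0, 0] := by
  refine ⟨?_, ?_, ?_⟩
  · rw [mem_extremePoints]
    refine ⟨by rw [kw_mem_iff]; norm_num, ?_⟩
    intro p hp q hq hseg
    obtain ⟨a, c, ha, hc, hac, hsum⟩ := hseg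
    have h0 : a * p 0 + c * q 0 = 1 := by simpa using congrFun hsum 0
    have h1 : a * p 1 + c * q 1 = 1 := by simpa using congrFun hsum 1
    have h2 : a * p 2 + c * q 2 = 8 := by simpa using congrFun hsum 2
    have h3 : a * p 3 + c * q 3 = 8 := by simpa using congrFun hsum 3
    rw [kw_mem_iff] at hp hq
    obtain ⟨hp0, hp1, hp2, hp3, -, -, -, -⟩ := hp
    obtain ⟨hq0, hq1, hq2, hq3, -, -, -, -⟩ := hq
    have E0 := eq_of_combo ha hc hac hp0 hq0 (by linear_combination (-6)*h0 - 3*h1 + h3)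
    have E1 := eq_of_combo ha hc hac hp1 hq1 (by linear_combination (-3)*h0 - 6*h1 + h2)
    have E2 := eq_of_combo ha hc hac hp2 hq2 (by
      linear_combination (-35)*h0 - 45*h1 + 6*h2 + 3*h3)
    have E3 := eq_of_combo ha hc hac hp3 hq3 (by
      linear_combination (-45)*h0 - 35*h1 + 3*h2 + 6*h3)
    constructor
    · funext j
      fin_cases j
      exacts [show p 0 = 1 by linarith [E0.1, E1.1, E2.1, E3.1],
        show p 1 = 1 by linarith [E0.1, E1.1, E2.1, E3.1],
        show p 2 = 8 by linarith [E0.1, E1.1, E2.1, E3.1],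
        show p 3 = 8 by linarith [E0.1, E1.1, E2.1, E3.1]]
    · funext j
      fin_cases j
      exacts [show q 0 = 1 by linarith [E0.2, E1.2, E2.2, E3.2],
        show q 1 = 1 by linarith [E0.2, E1.2, E2.2, E3.2],
        show q 2 = 8 by linarith [E0.2, E1.2, E2.2, E3.2],
        show q 3 = 8 by linarith [E0.2, E1.2, E2.2, E3.2]]
  · rw [mem_extremePoints]
    refine ⟨by rw [kw_mem_iff]; norm_num, ?_⟩
    intro p hp q hq hseg
    obtain ⟨a, c, ha, hc, hac, hsum⟩ := hseg
    have h0 : a * p 0 + c * q 0 = 0 := by simpa using congrFun hsum 0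
    have h1 : a * p 1 + c * q 1 = 0 := by simpa using congrFun hsum 1
    have h2 : a * p 2 + c * q 2 = 0 := by simpa using congrFun hsum 2
    have h3 : a * p 3 + c * q 3 = 0 := by simpa using congrFun hsum 3
    rw [kw_mem_iff] at hp hq
    obtain ⟨-, -, -, -, hp4, hp5, hp6, hp7⟩ := hp
    obtain ⟨-, -, -, -, hq4, hq5, hq6, hq7⟩ := hq
    have E0 := eq_of_combo ha hc hac hp4 hq4 h0
    have E1 := eq_of_combo ha hc hac hp5 hq5 h1
    have E2 := eq_of_combo ha hc hac hp6 hq6 h2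
    have E3 := eq_of_combo ha hc hac hp7 hq7 h3
    constructor
    · funext j
      fin_cases j
      exacts [E0.1, E1.1, E2.1, E3.1]
    · funext j
      fin_cases j
      exacts [E0.2, E1.2, E2.2, E3.2]
  · refine ⟨4, le_refl 4, ?_⟩
    refine ⟨![![1,1,8,8], ![26/9, 0, 8, 49/3], ![2/9, 0, 0, 1/3], ![1/6, 0, 0, 0],
      ![0,0,0,0]], rfl, rfl, ?_, ?_⟩
    · intro i
      fin_cases i <;> (rw [kw_mem_iff]; norm_num)
    · intro i
      fin_cases i
      · refine ⟨![17, -9, 0, 75], 1/9, circ0, by norm_num, ?_, ?_⟩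
        · show (![26/9, 0, 8, 49/3] : Fin 4 → ℝ) = ![1,1,8,8] + (1/9 : ℝ) • ![17, -9, 0, 75]
          funext j
          fin_cases j <;> norm_num
        · intro β hβ
          show (![1,1,8,8] : Fin 4 → ℝ) + β • ![17, -9, 0, 75] ∉ polySet kwA kwb
          intro hmem
          rw [kw_mem_iff] at hmem
          have := hmem.2.2.2.2.2.1
          norm_num at this
          linarith
      · refine ⟨![-1, 0, -3, -6], 8/3, circ1, by norm_num, ?_, ?_⟩
        · show (![2/9, 0, 0, 1/3] : Fin 4 → ℝ) = ![26/9, 0, 8, 49/3] + (8/3 : ℝ) • ![-1, 0, -3, -6]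
          funext j
          fin_cases j <;> norm_num
        · intro β hβ
          show (![26/9, 0, 8, 49/3] : Fin 4 → ℝ) + β • ![-1, 0, -3, -6] ∉ polySet kwA kwb
          intro hmem
          rw [kw_mem_iff] at hmem
          have := hmem.2.2.2.2.2.2.1
          norm_num at this
          linarith
      · refine ⟨![-1, 0, 0, -6], 1/18, circ2, by norm_num, ?_, ?_⟩
        · show (![1/6, 0, 0, 0] : Fin 4 → ℝ) = ![2/9, 0, 0, 1/3] + (1/18 : ℝ) • ![-1, 0, 0, -6]
          funext j
          fin_cases j <;> norm_num
        · intro β hβ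
          show (![2/9, 0, 0, 1/3] : Fin 4 → ℝ) + β • ![-1, 0, 0, -6] ∉ polySet kwA kwb
          intro hmem
          rw [kw_mem_iff] at hmem
          have := hmem.2.2.2.2.2.2.2
          norm_num at this
          linarith
      · refine ⟨![-1, 0, 0, 0], 1/6, circ3, by norm_num, ?_, ?_⟩
        · show (![0,0,0,0] : Fin 4 → ℝ) = ![1/6, 0, 0, 0] + (1/6 : ℝ) • ![-1, 0, 0, 0]
          funext j
          fin_cases j <;> norm_num
        · intro β hβ
          show (![1/6, 0, 0, 0] : Fin 4 → ℝ) + β • ![-1, 0, 0, 0] ∉ polySet kwA kwb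
          intro hmem
          rw [kw_mem_iff] at hmem
          have := hmem.2.2.2.2.1
          norm_num at this
          linarith
end
end

section
/- Circuit distance is not symmetric: there exist a rational matrix A ∈ ℚ^{m×2}, a vector b ∈ ℚᵐ such that P = {x ∈ ℝ² : Ax ≥ b} is a polytope, and two vertices u, v of P, such that the minimum length of a circuit walk from u to v is strictly smaller than the minimum length of a circuit walk from v to u. -/
open Matrix

noncomputable section

namespace CDNS

def Aq : Matrix (Fin 6) (Fin 2) ℚ := !![0,4; -3,-1; -4,-2; 1,-2; 2,-3; 4,4]
def bq : Fin 6 → ℚ := ![0,-12,-18,-13,-20,0]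
def AR : Matrix (Fin 6) (Fin 2) ℝ := Aq.map Rat.cast
def bR : Fin 6 → ℝ := fun i => (bq i : ℝ)


lemma mv0 (x : Fin 2 → ℝ) : AR.mulVec x 0 = 0 * x 0 + 4 * x 1 := by
  simp [Matrix.mulVec, dotProduct, Fin.sum_univ_two, AR, Matrix.map_apply,
    show Aq 0 0 = 0 from rfl, show Aq 0 1 = 4 from rfl]
  try push_cast
  try ring

lemma mv1 (x : Fin 2 → ℝ) : AR.mulVec x 1 = (-3) * x 0 + (-1) * x 1 := by
  simp [Matrix.mulVec, dotProduct, Fin.sum_univ_two, AR, Matrix.map_apply,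
    show Aq 1 0 = (-3) from rfl, show Aq 1 1 = (-1) from rfl]
  try push_cast
  try ring

lemma mv2 (x : Fin 2 → ℝ) : AR.mulVec x 2 = (-4) * x 0 + (-2) * x 1 := by
  simp [Matrix.mulVec, dotProduct, Fin.sum_univ_two, AR, Matrix.map_apply,
    show Aq 2 0 = (-4) from rfl, show Aq 2 1 = (-2) from rfl]
  try push_cast
  try ring

lemma mv3 (x : Fin 2 → ℝ) : AR.mulVec x 3 = 1 * x 0 + (-2) * x 1 := by
  simp [Matrix.mulVec, dotProduct, Fin.sum_univ_two, AR, Matrix.map_apply,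
    show Aq 3 0 = 1 from rfl, show Aq 3 1 = (-2) from rfl]
  try push_cast
  try ring

lemma mv4 (x : Fin 2 → ℝ) : AR.mulVec x 4 = 2 * x 0 + (-3) * x 1 := by
  simp [Matrix.mulVec, dotProduct, Fin.sum_univ_two, AR, Matrix.map_apply,
    show Aq 4 0 = 2 from rfl, show Aq 4 1 = (-3) from rfl]
  try push_cast
  try ring

lemma mv5 (x : Fin 2 → ℝ) : AR.mulVec x 5 = 4 * x 0 + 4 * x 1 := by
  simp [Matrix.mulVec, dotProduct, Fin.sum_univ_two, AR, Matrix.map_apply,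
    show Aq 5 0 = 4 from rfl, show Aq 5 1 = 4 from rfl]
  try push_cast
  try ring

lemma bv0 : bR 0 = 0 := by
  norm_num [bR, show bq 0 = 0 from rfl]

lemma bv1 : bR 1 = (-12) := by
  norm_num [bR, show bq 1 = (-12) from rfl]

lemma bv2 : bR 2 = (-18) := by
  norm_num [bR, show bq 2 = (-18) from rfl]

lemma bv3 : bR 3 = (-13) := by
  norm_num [bR, show bq 3 = (-13) from rfl]

lemma bv4 : bR 4 = (-20) := by
  norm_num [bR, show bq 4 = (-20) from rfl]

lemma bv5 : bR 5 = 0 := by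
  norm_num [bR, show bq 5 = 0 from rfl]

lemma memP_iff (x : Fin 2 → ℝ) : x ∈ polySet AR bR ↔
    (0 ≤ 0 * x 0 + 4 * x 1) ∧ ((-12) ≤ (-3) * x 0 + (-1) * x 1) ∧ ((-18) ≤ (-4) * x 0 + (-2) * x 1) ∧ ((-13) ≤ 1 * x 0 + (-2) * x 1) ∧ ((-20) ≤ 2 * x 0 + (-3) * x 1) ∧ (0 ≤ 4 * x 0 + 4 * x 1) := by
  constructor
  · intro h
    refine ⟨?_, ?_, ?_, ?_, ?_, ?_⟩
    have h := h 0; rwa [mv0, bv0] at h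
    have h := h 1; rwa [mv1, bv1] at h
    have h := h 2; rwa [mv2, bv2] at h
    have h := h 3; rwa [mv3, bv3] at h
    have h := h 4; rwa [mv4, bv4] at h
    have h := h 5; rwa [mv5, bv5] at h
  · rintro ⟨h0, h1, h2, h3, h4, h5⟩ i
    fin_cases i
    show bR 0 ≤ AR.mulVec x 0; rw [mv0, bv0]; exact h0
    show bR 1 ≤ AR.mulVec x 1; rw [mv1, bv1]; exact h1
    show bR 2 ≤ AR.mulVec x 2; rw [mv2, bv2]; exact h2
    show bR 3 ≤ AR.mulVec x 3; rw [mv3, bv3]; exact h3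
    show bR 4 ≤ AR.mulVec x 4; rw [mv4, bv4]; exact h4
    show bR 5 ≤ AR.mulVec x 5; rw [mv5, bv5]; exact h5

lemma ne0_of {g : Fin 2 → ℝ} (h : g ≠ 0) : ¬ (g 0 = 0 ∧ g 1 = 0) := by
  rintro ⟨e0, e1⟩
  apply h
  funext i
  fin_cases i
  · simpa using e0
  · simpa using e1

lemma circuit_mem {g : Fin 2 → ℝ} (hc : IsCircuit AR g) :
    (0 * g 0 + 4 * g 1 = 0) ∨ ((-3) * g 0 + (-1) * g 1 = 0) ∨ ((-4) * g 0 + (-2) * g 1 = 0) ∨ (1 * g 0 + (-2) * g 1 = 0) ∨ (2 * g 0 + (-3) * g 1 = 0) ∨ (4 * g 0 + 4 * g 1 = 0) := by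
  by_contra hcon
  push_neg at hcon
  obtain ⟨h0, h1, h2, h3, h4, h5⟩ := hcon
  have hw : (![1, 0] : Fin 2 → ℝ) ≠ 0 := by
    intro h; have := congrFun h 0; norm_num at this
  have hsub : {i | AR.mulVec ![1, 0] i ≠ 0} ⊆ {i | AR.mulVec g i ≠ 0} := by
    intro i _
    simp only [Set.mem_setOf_eq]
    fin_cases i
    · show AR.mulVec g 0 ≠ 0; rw [mv0]; exact h0
    · show AR.mulVec g 1 ≠ 0; rw [mv1]; exact h1
    · show AR.mulVec g 2 ≠ 0; rw [mv2]; exact h2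
    · show AR.mulVec g 3 ≠ 0; rw [mv3]; exact h3
    · show AR.mulVec g 4 ≠ 0; rw [mv4]; exact h4
    · show AR.mulVec g 5 ≠ 0; rw [mv5]; exact h5
  have heq := hc.2 ![1, 0] hw hsub
  have h0m : (0 : Fin 6) ∈ {i | AR.mulVec g i ≠ 0} := by
    simp only [Set.mem_setOf_eq]; rw [mv0]; exact h0
  rw [← heq] at h0m
  simp only [Set.mem_setOf_eq] at h0m
  apply h0m
  rw [mv0]
  norm_num

lemma circA : IsCircuit AR ![(-3), (-2)] := by
  constructor
  · intro h; have := congrFun h 0; norm_num at this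
  · intro w hw hsub
    have hz : AR.mulVec ![(-3), (-2)] 4 = 0 := by rw [mv4]; norm_num
    have h4 : AR.mulVec w 4 = 0 := by
      by_contra hne
      have hmem : (4 : Fin 6) ∈ {i | AR.mulVec w i ≠ 0} := hne
      exact (hsub hmem) hz
    rw [mv4] at h4
    have hns : ¬ (w 0 = 0 ∧ w 1 = 0) := ne0_of hw
    apply Set.Subset.antisymm hsub
    intro i hig
    simp only [Set.mem_setOf_eq] at hig ⊢
    fin_cases i
    · show AR.mulVec w 0 ≠ 0
      rw [mv0]
      intro hcur
      exact hns ⟨by linarith, by linarith⟩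
    · show AR.mulVec w 1 ≠ 0
      rw [mv1]
      intro hcur
      exact hns ⟨by linarith, by linarith⟩
    · show AR.mulVec w 2 ≠ 0
      rw [mv2]
      intro hcur
      exact hns ⟨by linarith, by linarith⟩
    · show AR.mulVec w 3 ≠ 0
      rw [mv3]
      intro hcur
      exact hns ⟨by linarith, by linarith⟩
    · exact absurd hz (by simpa using hig)
    · show AR.mulVec w 5 ≠ 0
      rw [mv5]
      intro hcur
      exact hns ⟨by linarith, by linarith⟩

lemma circB : IsCircuit AR ![4, (-4)] := by
  constructor
  · intro h; have := congrFun h 0; norm_num at this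
  · intro w hw hsub
    have hz : AR.mulVec ![4, (-4)] 5 = 0 := by rw [mv5]; norm_num
    have h4 : AR.mulVec w 5 = 0 := by
      by_contra hne
      have hmem : (5 : Fin 6) ∈ {i | AR.mulVec w i ≠ 0} := hne
      exact (hsub hmem) hz
    rw [mv5] at h4
    have hns : ¬ (w 0 = 0 ∧ w 1 = 0) := ne0_of hw
    apply Set.Subset.antisymm hsub
    intro i hig
    simp only [Set.mem_setOf_eq] at hig ⊢
    fin_cases i
    · show AR.mulVec w 0 ≠ 0
      rw [mv0]
      intro hcur
      exact hns ⟨by linarith, by linarith⟩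
    · show AR.mulVec w 1 ≠ 0
      rw [mv1]
      intro hcur
      exact hns ⟨by linarith, by linarith⟩
    · show AR.mulVec w 2 ≠ 0
      rw [mv2]
      intro hcur
      exact hns ⟨by linarith, by linarith⟩
    · show AR.mulVec w 3 ≠ 0
      rw [mv3]
      intro hcur
      exact hns ⟨by linarith, by linarith⟩
    · show AR.mulVec w 4 ≠ 0
      rw [mv4]
      intro hcur
      exact hns ⟨by linarith, by linarith⟩
    · exact absurd hz (by simpa using hig)

lemma u_ext : (![(1:ℝ), 7] : Fin 2 → ℝ) ∈ Set.extremePoints ℝ (polySet AR bR) := by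
  refine ⟨(memP_iff _).2 (by norm_num), ?_⟩
  intro x₁ h₁ x₂ h₂ hseg
  obtain ⟨a, b, ha, hb, hab, hsum⟩ := hseg
  obtain ⟨m10, m11, m12, m13, m14, m15⟩ := (memP_iff x₁).1 h₁
  obtain ⟨m20, m21, m22, m23, m24, m25⟩ := (memP_iff x₂).1 h₂
  have e0 := congrFun hsum 0
  have e1 := congrFun hsum 1
  simp only [Pi.add_apply, Pi.smul_apply, smul_eq_mul, Matrix.cons_val_zero,
    Matrix.cons_val_one, Matrix.head_cons] at e0 e1
  have kA : a * ((-4) * x₁ 0 + (-2) * x₁ 1 + 18) + b * ((-4) * x₂ 0 + (-2) * x₂ 1 + 18) = 0 := by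
    linear_combination ((-4) : ℝ) * e0 + ((-2) : ℝ) * e1 + (18 : ℝ) * hab
  have pA1 : 0 ≤ a * ((-4) * x₁ 0 + (-2) * x₁ 1 + 18) := mul_nonneg ha.le (by linarith)
  have pA2 : 0 ≤ b * ((-4) * x₂ 0 + (-2) * x₂ 1 + 18) := mul_nonneg hb.le (by linarith)
  have zA1 : (-4) * x₁ 0 + (-2) * x₁ 1 + 18 = 0 := by
    have hz : a * ((-4) * x₁ 0 + (-2) * x₁ 1 + 18) = 0 := by linarith
    rcases mul_eq_zero.1 hz with hz' | hz'
    · exact absurd hz' (ne_of_gt ha)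
    · exact hz'
  have zA2 : (-4) * x₂ 0 + (-2) * x₂ 1 + 18 = 0 := by
    have hz : b * ((-4) * x₂ 0 + (-2) * x₂ 1 + 18) = 0 := by linarith
    rcases mul_eq_zero.1 hz with hz' | hz'
    · exact absurd hz' (ne_of_gt hb)
    · exact hz'
  have kB : a * (1 * x₁ 0 + (-2) * x₁ 1 + 13) + b * (1 * x₂ 0 + (-2) * x₂ 1 + 13) = 0 := by
    linear_combination (1 : ℝ) * e0 + ((-2) : ℝ) * e1 + (13 : ℝ) * hab
  have pB1 : 0 ≤ a * (1 * x₁ 0 + (-2) * x₁ 1 + 13) := mul_nonneg ha.le (by linarith)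
  have pB2 : 0 ≤ b * (1 * x₂ 0 + (-2) * x₂ 1 + 13) := mul_nonneg hb.le (by linarith)
  have zB1 : 1 * x₁ 0 + (-2) * x₁ 1 + 13 = 0 := by
    have hz : a * (1 * x₁ 0 + (-2) * x₁ 1 + 13) = 0 := by linarith
    rcases mul_eq_zero.1 hz with hz' | hz'
    · exact absurd hz' (ne_of_gt ha)
    · exact hz'
  have zB2 : 1 * x₂ 0 + (-2) * x₂ 1 + 13 = 0 := by
    have hz : b * (1 * x₂ 0 + (-2) * x₂ 1 + 13) = 0 := by linarith
    rcases mul_eq_zero.1 hz with hz' | hz'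
    · exact absurd hz' (ne_of_gt hb)
    · exact hz'
  suffices hboth : x₁ = ![(1:ℝ), 7] ∧ x₂ = ![(1:ℝ), 7] from hboth.1
  constructor
  · funext i; fin_cases i
    · show x₁ 0 = (1:ℝ); linarith
    · show x₁ 1 = (7:ℝ); linarith
  · funext i; fin_cases i
    · show x₂ 0 = (1:ℝ); linarith
    · show x₂ 1 = (7:ℝ); linarith

lemma v_ext : (![(0:ℝ), 0] : Fin 2 → ℝ) ∈ Set.extremePoints ℝ (polySet AR bR) := by
  refine ⟨(memP_iff _).2 (by norm_num), ?_⟩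
  intro x₁ h₁ x₂ h₂ hseg
  obtain ⟨a, b, ha, hb, hab, hsum⟩ := hseg
  obtain ⟨m10, m11, m12, m13, m14, m15⟩ := (memP_iff x₁).1 h₁
  obtain ⟨m20, m21, m22, m23, m24, m25⟩ := (memP_iff x₂).1 h₂
  have e0 := congrFun hsum 0
  have e1 := congrFun hsum 1
  simp only [Pi.add_apply, Pi.smul_apply, smul_eq_mul, Matrix.cons_val_zero,
    Matrix.cons_val_one, Matrix.head_cons] at e0 e1
  have kA : a * (0 * x₁ 0 + 4 * x₁ 1 + 0) + b * (0 * x₂ 0 + 4 * x₂ 1 + 0) = 0 := by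
    linear_combination (0 : ℝ) * e0 + (4 : ℝ) * e1 + (0 : ℝ) * hab
  have pA1 : 0 ≤ a * (0 * x₁ 0 + 4 * x₁ 1 + 0) := mul_nonneg ha.le (by linarith)
  have pA2 : 0 ≤ b * (0 * x₂ 0 + 4 * x₂ 1 + 0) := mul_nonneg hb.le (by linarith)
  have zA1 : 0 * x₁ 0 + 4 * x₁ 1 + 0 = 0 := by
    have hz : a * (0 * x₁ 0 + 4 * x₁ 1 + 0) = 0 := by linarith
    rcases mul_eq_zero.1 hz with hz' | hz'
    · exact absurd hz' (ne_of_gt ha)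
    · exact hz'
  have zA2 : 0 * x₂ 0 + 4 * x₂ 1 + 0 = 0 := by
    have hz : b * (0 * x₂ 0 + 4 * x₂ 1 + 0) = 0 := by linarith
    rcases mul_eq_zero.1 hz with hz' | hz'
    · exact absurd hz' (ne_of_gt hb)
    · exact hz'
  have kB : a * (4 * x₁ 0 + 4 * x₁ 1 + 0) + b * (4 * x₂ 0 + 4 * x₂ 1 + 0) = 0 := by
    linear_combination (4 : ℝ) * e0 + (4 : ℝ) * e1 + (0 : ℝ) * hab
  have pB1 : 0 ≤ a * (4 * x₁ 0 + 4 * x₁ 1 + 0) := mul_nonneg ha.le (by linarith)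
  have pB2 : 0 ≤ b * (4 * x₂ 0 + 4 * x₂ 1 + 0) := mul_nonneg hb.le (by linarith)
  have zB1 : 4 * x₁ 0 + 4 * x₁ 1 + 0 = 0 := by
    have hz : a * (4 * x₁ 0 + 4 * x₁ 1 + 0) = 0 := by linarith
    rcases mul_eq_zero.1 hz with hz' | hz'
    · exact absurd hz' (ne_of_gt ha)
    · exact hz'
  have zB2 : 4 * x₂ 0 + 4 * x₂ 1 + 0 = 0 := by
    have hz : b * (4 * x₂ 0 + 4 * x₂ 1 + 0) = 0 := by linarith
    rcases mul_eq_zero.1 hz with hz' | hz'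
    · exact absurd hz' (ne_of_gt hb)
    · exact hz'
  suffices hboth : x₁ = ![(0:ℝ), 0] ∧ x₂ = ![(0:ℝ), 0] from hboth.1
  constructor
  · funext i; fin_cases i
    · show x₁ 0 = (0:ℝ); linarith
    · show x₁ 1 = (0:ℝ); linarith
  · funext i; fin_cases i
    · show x₂ 0 = (0:ℝ); linarith
    · show x₂ 1 = (0:ℝ); linarith

lemma boundedP : Bornology.IsBounded (polySet AR bR) := by
  refine (Metric.isBounded_closedBall (x := (0 : Fin 2 → ℝ)) (r := 8)).subset ?_
  intro x hx
  obtain ⟨h0, h1, h2, h3, h4, h5⟩ := (memP_iff x).1 hx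
  rw [Metric.mem_closedBall, dist_zero_right]
  refine (pi_norm_le_iff_of_nonneg (by norm_num)).2 ?_
  intro i; fin_cases i
  · show ‖x 0‖ ≤ (8:ℝ)
    rw [Real.norm_eq_abs, abs_le]; constructor <;> linarith
  · show ‖x 1‖ ≤ (8:ℝ)
    rw [Real.norm_eq_abs, abs_le]; constructor <;> linarith

lemma walk_fwd : IsCircuitWalk AR bR 2 ![(1:ℝ),7] ![(0:ℝ),0] := by
  refine ⟨![![(1:ℝ),7], ![(-19/5:ℝ),19/5], ![(0:ℝ),0]], rfl, rfl, ?_, ?_⟩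
  · intro i
    fin_cases i <;> refine (memP_iff _).2 (by norm_num)
  · intro i
    fin_cases i
    · refine ⟨![(-3:ℝ),-2], 8/5, circA, by norm_num, ?_, ?_⟩
      · show (![(-19/5:ℝ),19/5] : Fin 2 → ℝ) = ![(1:ℝ),7] + (8/5:ℝ) • ![(-3:ℝ),-2]
        funext w; fin_cases w <;> norm_num
      · show ∀ β : ℝ, (8/5:ℝ) < β → ![(1:ℝ),7] + β • ![(-3:ℝ),-2] ∉ polySet AR bR
        intro β hβ hmm
        obtain ⟨-, -, -, -, -, m5⟩ := (memP_iff _).1 hmm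
        simp only [Pi.add_apply, Pi.smul_apply, smul_eq_mul, Matrix.cons_val_zero,
          Matrix.cons_val_one, Matrix.head_cons] at m5
        linarith
    · refine ⟨![(4:ℝ),-4], 19/20, circB, by norm_num, ?_, ?_⟩
      · show (![(0:ℝ),0] : Fin 2 → ℝ) = ![(-19/5:ℝ),19/5] + (19/20:ℝ) • ![(4:ℝ),-4]
        funext w; fin_cases w <;> norm_num
      · show ∀ β : ℝ, (19/20:ℝ) < β → ![(-19/5:ℝ),19/5] + β • ![(4:ℝ),-4] ∉ polySet AR bR
        intro β hβ hmm
        obtain ⟨m0, -, -, -, -, -⟩ := (memP_iff _).1 hmm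
        simp only [Pi.add_apply, Pi.smul_apply, smul_eq_mul, Matrix.cons_val_zero,
          Matrix.cons_val_one, Matrix.head_cons] at m0
        linarith

lemma reverse_long : ∀ j : ℕ, IsCircuitWalk AR bR j ![(0:ℝ),0] ![(1:ℝ),7] → 2 < j := by
  intro j hw
  by_contra hle
  push_neg at hle
  interval_cases j
  · obtain ⟨y, hy0, hyl, -, -⟩ := hw
    have hcon : (![(0:ℝ),0] : Fin 2 → ℝ) = ![(1:ℝ),7] := by
      rw [← hy0, ← hyl]
      exact congrArg y rfl
    have h00 := congrFun hcon 0
    norm_num at h00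
  · obtain ⟨y, hy0, hyl, hmem, hstep⟩ := hw
    obtain ⟨g, α, hc, hα, heq, -⟩ := hstep 0
    have heq1 : (![(1:ℝ),7] : Fin 2 → ℝ) = ![(0:ℝ),0] + α • g := by
      rw [← hy0, ← hyl]; exact heq
    have E0' := congrFun heq1 0
    have E1' := congrFun heq1 1
    simp only [Pi.add_apply, Pi.smul_apply, smul_eq_mul, Matrix.cons_val_zero,
      Matrix.cons_val_one, Matrix.head_cons, zero_add] at E0' E1'
    have E0 : α * g 0 = 1 := by linarith
    have E1 : α * g 1 = 7 := by linarith
    rcases circuit_mem hc with h | h | h | h | h | h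
    · have h2 : (0:ℝ) * (α * g 0) + (4:ℝ) * (α * g 1) = α * (0 * g 0 + 4 * g 1) := by ring
      rw [h, mul_zero, E0, E1] at h2
      norm_num at h2
    · have h2 : ((-3):ℝ) * (α * g 0) + ((-1):ℝ) * (α * g 1) = α * ((-3) * g 0 + (-1) * g 1) := by ring
      rw [h, mul_zero, E0, E1] at h2
      norm_num at h2
    · have h2 : ((-4):ℝ) * (α * g 0) + ((-2):ℝ) * (α * g 1) = α * ((-4) * g 0 + (-2) * g 1) := by ring
      rw [h, mul_zero, E0, E1] at h2
      norm_num at h2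
    · have h2 : (1:ℝ) * (α * g 0) + ((-2):ℝ) * (α * g 1) = α * (1 * g 0 + (-2) * g 1) := by ring
      rw [h, mul_zero, E0, E1] at h2
      norm_num at h2
    · have h2 : (2:ℝ) * (α * g 0) + ((-3):ℝ) * (α * g 1) = α * (2 * g 0 + (-3) * g 1) := by ring
      rw [h, mul_zero, E0, E1] at h2
      norm_num at h2
    · have h2 : (4:ℝ) * (α * g 0) + (4:ℝ) * (α * g 1) = α * (4 * g 0 + 4 * g 1) := by ring
      rw [h, mul_zero, E0, E1] at h2
      norm_num at h2
  · obtain ⟨y, hy0, hyl, hmem, hstep⟩ := hw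
    obtain ⟨g, α, hc, hα, heq, hmax⟩ := hstep 0
    obtain ⟨g', α', hc', hα', heq', -⟩ := hstep 1
    have heq1 : y 1 = ![(0:ℝ),0] + α • g := by
      rw [← hy0]; exact heq
    have heq2 : (![(1:ℝ),7] : Fin 2 → ℝ) = y 1 + α' • g' := by
      rw [← hyl]; exact heq'
    have hmax' : ∀ β : ℝ, α < β → (![(0:ℝ),0] : Fin 2 → ℝ) + β • g ∉ polySet AR bR := by
      intro β hβ
      rw [← hy0]
      exact hmax β hβ
    have Eq0 : y 1 0 = α * g 0 := by
      have h' := congrFun heq1 0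
      simpa only [Pi.add_apply, Pi.smul_apply, smul_eq_mul, Matrix.cons_val_zero, zero_add] using h'
    have Eq1 : y 1 1 = α * g 1 := by
      have h' := congrFun heq1 1
      simpa only [Pi.add_apply, Pi.smul_apply, smul_eq_mul, Matrix.cons_val_one,
        Matrix.head_cons, Matrix.cons_val_zero, zero_add] using h'
    have G0 := congrFun heq2 0
    have G1 := congrFun heq2 1
    simp only [Pi.add_apply, Pi.smul_apply, smul_eq_mul, Matrix.cons_val_zero,
      Matrix.cons_val_one, Matrix.head_cons] at G0 G1
    obtain ⟨m0, m1, m2, m3, m4, m5⟩ := (memP_iff (y 1)).1 (hmem 1)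
    have hgne := ne0_of hc.1
    rcases circuit_mem hc with h | h | h | h | h | h
    · -- row 0
      have hline : (0:ℝ) * y 1 0 + (4:ℝ) * y 1 1 = 0 := by
        linear_combination (0:ℝ) * Eq0 + (4:ℝ) * Eq1 + α * h
      rcases lt_trichotomy (g 0) 0 with hg | hg | hg
      · have hsgn : y 1 0 < 0 := by
          rw [Eq0]; exact mul_neg_of_pos_of_neg hα hg
        linarith
      · exact hgne ⟨hg, by linarith⟩
      · have hsgn : 0 < y 1 0 := by
          rw [Eq0]; exact mul_pos hα hg
        have hbnd : y 1 0 ≤ (4:ℝ) := by linarith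
        by_cases hx : y 1 0 = (4:ℝ)
        · have hy11 : y 1 1 = (0:ℝ) := by
            rw [hx] at hline; linarith
          have F0 : α' * g' 0 = ((-3):ℝ) := by rw [hx] at G0; linarith
          have F1 : α' * g' 1 = (7:ℝ) := by rw [hy11] at G1; linarith
          rcases circuit_mem hc' with h' | h' | h' | h' | h' | h'
          · have h2 : (0:ℝ) * (α' * g' 0) + (4:ℝ) * (α' * g' 1) = α' * (0 * g' 0 + 4 * g' 1) := by ring
            rw [h', mul_zero, F0, F1] at h2
            norm_num at h2
          · have h2 : ((-3):ℝ) * (α' * g' 0) + ((-1):ℝ) * (α' * g' 1) = α' * ((-3) * g' 0 + (-1) * g' 1) := by ring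
            rw [h', mul_zero, F0, F1] at h2
            norm_num at h2
          · have h2 : ((-4):ℝ) * (α' * g' 0) + ((-2):ℝ) * (α' * g' 1) = α' * ((-4) * g' 0 + (-2) * g' 1) := by ring
            rw [h', mul_zero, F0, F1] at h2
            norm_num at h2
          · have h2 : (1:ℝ) * (α' * g' 0) + ((-2):ℝ) * (α' * g' 1) = α' * (1 * g' 0 + (-2) * g' 1) := by ring
            rw [h', mul_zero, F0, F1] at h2
            norm_num at h2
          · have h2 : (2:ℝ) * (α' * g' 0) + ((-3):ℝ) * (α' * g' 1) = α' * (2 * g' 0 + (-3) * g' 1) := by ring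
            rw [h', mul_zero, F0, F1] at h2
            norm_num at h2
          · have h2 : (4:ℝ) * (α' * g' 0) + (4:ℝ) * (α' * g' 1) = α' * (4 * g' 0 + 4 * g' 1) := by ring
            rw [h', mul_zero, F0, F1] at h2
            norm_num at h2
        · have hstrict : y 1 0 < (4:ℝ) := lt_of_le_of_ne hbnd hx
          refine hmax' ((4:ℝ) / g 0) ?_ ?_
          · rw [lt_div_iff₀ hg]
            linarith
          · have hpt : (![(0:ℝ),0] : Fin 2 → ℝ) + ((4:ℝ) / g 0) • g = ![(4:ℝ), 0] := by
              funext w; fin_cases w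
              · show (0:ℝ) + (4:ℝ) / g 0 * g 0 = (4:ℝ)
                rw [zero_add, div_mul_eq_mul_div, div_eq_iff (ne_of_gt hg)]
              · show (0:ℝ) + (4:ℝ) / g 0 * g 1 = (0:ℝ)
                rw [zero_add, div_mul_eq_mul_div, div_eq_iff (ne_of_gt hg)]
                linear_combination (1:ℝ) * h
            rw [hpt]
            exact (memP_iff _).2 (by norm_num)
    · -- row 1
      have hline : ((-3):ℝ) * y 1 0 + ((-1):ℝ) * y 1 1 = 0 := by
        linear_combination ((-3):ℝ) * Eq0 + ((-1):ℝ) * Eq1 + α * h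
      rcases lt_trichotomy (g 0) 0 with hg | hg | hg
      · have hsgn : y 1 0 < 0 := by
          rw [Eq0]; exact mul_neg_of_pos_of_neg hα hg
        have hbnd : ((-20/11):ℝ) ≤ y 1 0 := by linarith
        by_cases hx : y 1 0 = ((-20/11):ℝ)
        · have hy11 : y 1 1 = ((60/11):ℝ) := by
            rw [hx] at hline; linarith
          have F0 : α' * g' 0 = ((31/11):ℝ) := by rw [hx] at G0; linarith
          have F1 : α' * g' 1 = ((17/11):ℝ) := by rw [hy11] at G1; linarith
          rcases circuit_mem hc' with h' | h' | h' | h' | h' | h'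
          · have h2 : (0:ℝ) * (α' * g' 0) + (4:ℝ) * (α' * g' 1) = α' * (0 * g' 0 + 4 * g' 1) := by ring
            rw [h', mul_zero, F0, F1] at h2
            norm_num at h2
          · have h2 : ((-3):ℝ) * (α' * g' 0) + ((-1):ℝ) * (α' * g' 1) = α' * ((-3) * g' 0 + (-1) * g' 1) := by ring
            rw [h', mul_zero, F0, F1] at h2
            norm_num at h2
          · have h2 : ((-4):ℝ) * (α' * g' 0) + ((-2):ℝ) * (α' * g' 1) = α' * ((-4) * g' 0 + (-2) * g' 1) := by ring
            rw [h', mul_zero, F0, F1] at h2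
            norm_num at h2
          · have h2 : (1:ℝ) * (α' * g' 0) + ((-2):ℝ) * (α' * g' 1) = α' * (1 * g' 0 + (-2) * g' 1) := by ring
            rw [h', mul_zero, F0, F1] at h2
            norm_num at h2
          · have h2 : (2:ℝ) * (α' * g' 0) + ((-3):ℝ) * (α' * g' 1) = α' * (2 * g' 0 + (-3) * g' 1) := by ring
            rw [h', mul_zero, F0, F1] at h2
            norm_num at h2
          · have h2 : (4:ℝ) * (α' * g' 0) + (4:ℝ) * (α' * g' 1) = α' * (4 * g' 0 + 4 * g' 1) := by ring
            rw [h', mul_zero, F0, F1] at h2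
            norm_num at h2
        · have hstrict : ((-20/11):ℝ) < y 1 0 := lt_of_le_of_ne hbnd (Ne.symm hx)
          refine hmax' (((-20/11):ℝ) / g 0) ?_ ?_
          · rw [lt_div_iff_of_neg hg]
            linarith
          · have hpt : (![(0:ℝ),0] : Fin 2 → ℝ) + (((-20/11):ℝ) / g 0) • g = ![((-20/11):ℝ), (60/11)] := by
              funext w; fin_cases w
              · show (0:ℝ) + ((-20/11):ℝ) / g 0 * g 0 = ((-20/11):ℝ)
                rw [zero_add, div_mul_eq_mul_div, div_eq_iff (ne_of_lt hg)]
              · show (0:ℝ) + ((-20/11):ℝ) / g 0 * g 1 = ((60/11):ℝ)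
                rw [zero_add, div_mul_eq_mul_div, div_eq_iff (ne_of_lt hg)]
                linear_combination ((20/11):ℝ) * h
            rw [hpt]
            exact (memP_iff _).2 (by norm_num)
      · exact hgne ⟨hg, by linarith⟩
      · have hsgn : 0 < y 1 0 := by
          rw [Eq0]; exact mul_pos hα hg
        linarith
    · -- row 2
      have hline : ((-4):ℝ) * y 1 0 + ((-2):ℝ) * y 1 1 = 0 := by
        linear_combination ((-4):ℝ) * Eq0 + ((-2):ℝ) * Eq1 + α * h
      rcases lt_trichotomy (g 0) 0 with hg | hg | hg
      · have hsgn : y 1 0 < 0 := by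
          rw [Eq0]; exact mul_neg_of_pos_of_neg hα hg
        have hbnd : ((-5/2):ℝ) ≤ y 1 0 := by linarith
        by_cases hx : y 1 0 = ((-5/2):ℝ)
        · have hy11 : y 1 1 = (5:ℝ) := by
            rw [hx] at hline; linarith
          have F0 : α' * g' 0 = ((7/2):ℝ) := by rw [hx] at G0; linarith
          have F1 : α' * g' 1 = (2:ℝ) := by rw [hy11] at G1; linarith
          rcases circuit_mem hc' with h' | h' | h' | h' | h' | h'
          · have h2 : (0:ℝ) * (α' * g' 0) + (4:ℝ) * (α' * g' 1) = α' * (0 * g' 0 + 4 * g' 1) := by ring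
            rw [h', mul_zero, F0, F1] at h2
            norm_num at h2
          · have h2 : ((-3):ℝ) * (α' * g' 0) + ((-1):ℝ) * (α' * g' 1) = α' * ((-3) * g' 0 + (-1) * g' 1) := by ring
            rw [h', mul_zero, F0, F1] at h2
            norm_num at h2
          · have h2 : ((-4):ℝ) * (α' * g' 0) + ((-2):ℝ) * (α' * g' 1) = α' * ((-4) * g' 0 + (-2) * g' 1) := by ring
            rw [h', mul_zero, F0, F1] at h2
            norm_num at h2
          · have h2 : (1:ℝ) * (α' * g' 0) + ((-2):ℝ) * (α' * g' 1) = α' * (1 * g' 0 + (-2) * g' 1) := by ring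
            rw [h', mul_zero, F0, F1] at h2
            norm_num at h2
          · have h2 : (2:ℝ) * (α' * g' 0) + ((-3):ℝ) * (α' * g' 1) = α' * (2 * g' 0 + (-3) * g' 1) := by ring
            rw [h', mul_zero, F0, F1] at h2
            norm_num at h2
          · have h2 : (4:ℝ) * (α' * g' 0) + (4:ℝ) * (α' * g' 1) = α' * (4 * g' 0 + 4 * g' 1) := by ring
            rw [h', mul_zero, F0, F1] at h2
            norm_num at h2
        · have hstrict : ((-5/2):ℝ) < y 1 0 := lt_of_le_of_ne hbnd (Ne.symm hx)
          refine hmax' (((-5/2):ℝ) / g 0) ?_ ?_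
          · rw [lt_div_iff_of_neg hg]
            linarith
          · have hpt : (![(0:ℝ),0] : Fin 2 → ℝ) + (((-5/2):ℝ) / g 0) • g = ![((-5/2):ℝ), 5] := by
              funext w; fin_cases w
              · show (0:ℝ) + ((-5/2):ℝ) / g 0 * g 0 = ((-5/2):ℝ)
                rw [zero_add, div_mul_eq_mul_div, div_eq_iff (ne_of_lt hg)]
              · show (0:ℝ) + ((-5/2):ℝ) / g 0 * g 1 = (5:ℝ)
                rw [zero_add, div_mul_eq_mul_div, div_eq_iff (ne_of_lt hg)]
                linear_combination ((5/4):ℝ) * h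
            rw [hpt]
            exact (memP_iff _).2 (by norm_num)
      · exact hgne ⟨hg, by linarith⟩
      · have hsgn : 0 < y 1 0 := by
          rw [Eq0]; exact mul_pos hα hg
        linarith
    · -- row 3
      have hline : (1:ℝ) * y 1 0 + ((-2):ℝ) * y 1 1 = 0 := by
        linear_combination (1:ℝ) * Eq0 + ((-2):ℝ) * Eq1 + α * h
      rcases lt_trichotomy (g 0) 0 with hg | hg | hg
      · have hsgn : y 1 0 < 0 := by
          rw [Eq0]; exact mul_neg_of_pos_of_neg hα hg
        linarith
      · exact hgne ⟨hg, by linarith⟩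
      · have hsgn : 0 < y 1 0 := by
          rw [Eq0]; exact mul_pos hα hg
        have hbnd : y 1 0 ≤ ((24/7):ℝ) := by linarith
        by_cases hx : y 1 0 = ((24/7):ℝ)
        · have hy11 : y 1 1 = ((12/7):ℝ) := by
            rw [hx] at hline; linarith
          have F0 : α' * g' 0 = ((-17/7):ℝ) := by rw [hx] at G0; linarith
          have F1 : α' * g' 1 = ((37/7):ℝ) := by rw [hy11] at G1; linarith
          rcases circuit_mem hc' with h' | h' | h' | h' | h' | h'
          · have h2 : (0:ℝ) * (α' * g' 0) + (4:ℝ) * (α' * g' 1) = α' * (0 * g' 0 + 4 * g' 1) := by ring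
            rw [h', mul_zero, F0, F1] at h2
            norm_num at h2
          · have h2 : ((-3):ℝ) * (α' * g' 0) + ((-1):ℝ) * (α' * g' 1) = α' * ((-3) * g' 0 + (-1) * g' 1) := by ring
            rw [h', mul_zero, F0, F1] at h2
            norm_num at h2
          · have h2 : ((-4):ℝ) * (α' * g' 0) + ((-2):ℝ) * (α' * g' 1) = α' * ((-4) * g' 0 + (-2) * g' 1) := by ring
            rw [h', mul_zero, F0, F1] at h2
            norm_num at h2
          · have h2 : (1:ℝ) * (α' * g' 0) + ((-2):ℝ) * (α' * g' 1) = α' * (1 * g' 0 + (-2) * g' 1) := by ring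
            rw [h', mul_zero, F0, F1] at h2
            norm_num at h2
          · have h2 : (2:ℝ) * (α' * g' 0) + ((-3):ℝ) * (α' * g' 1) = α' * (2 * g' 0 + (-3) * g' 1) := by ring
            rw [h', mul_zero, F0, F1] at h2
            norm_num at h2
          · have h2 : (4:ℝ) * (α' * g' 0) + (4:ℝ) * (α' * g' 1) = α' * (4 * g' 0 + 4 * g' 1) := by ring
            rw [h', mul_zero, F0, F1] at h2
            norm_num at h2
        · have hstrict : y 1 0 < ((24/7):ℝ) := lt_of_le_of_ne hbnd hx
          refine hmax' (((24/7):ℝ) / g 0) ?_ ?_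
          · rw [lt_div_iff₀ hg]
            linarith
          · have hpt : (![(0:ℝ),0] : Fin 2 → ℝ) + (((24/7):ℝ) / g 0) • g = ![((24/7):ℝ), (12/7)] := by
              funext w; fin_cases w
              · show (0:ℝ) + ((24/7):ℝ) / g 0 * g 0 = ((24/7):ℝ)
                rw [zero_add, div_mul_eq_mul_div, div_eq_iff (ne_of_gt hg)]
              · show (0:ℝ) + ((24/7):ℝ) / g 0 * g 1 = ((12/7):ℝ)
                rw [zero_add, div_mul_eq_mul_div, div_eq_iff (ne_of_gt hg)]
                linear_combination ((-12/7):ℝ) * h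
            rw [hpt]
            exact (memP_iff _).2 (by norm_num)
    · -- row 4
      have hline : (2:ℝ) * y 1 0 + ((-3):ℝ) * y 1 1 = 0 := by
        linear_combination (2:ℝ) * Eq0 + ((-3):ℝ) * Eq1 + α * h
      rcases lt_trichotomy (g 0) 0 with hg | hg | hg
      · have hsgn : y 1 0 < 0 := by
          rw [Eq0]; exact mul_neg_of_pos_of_neg hα hg
        linarith
      · exact hgne ⟨hg, by linarith⟩
      · have hsgn : 0 < y 1 0 := by
          rw [Eq0]; exact mul_pos hα hg
        have hbnd : y 1 0 ≤ ((36/11):ℝ) := by linarith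
        by_cases hx : y 1 0 = ((36/11):ℝ)
        · have hy11 : y 1 1 = ((24/11):ℝ) := by
            rw [hx] at hline; linarith
          have F0 : α' * g' 0 = ((-25/11):ℝ) := by rw [hx] at G0; linarith
          have F1 : α' * g' 1 = ((53/11):ℝ) := by rw [hy11] at G1; linarith
          rcases circuit_mem hc' with h' | h' | h' | h' | h' | h'
          · have h2 : (0:ℝ) * (α' * g' 0) + (4:ℝ) * (α' * g' 1) = α' * (0 * g' 0 + 4 * g' 1) := by ring
            rw [h', mul_zero, F0, F1] at h2
            norm_num at h2
          · have h2 : ((-3):ℝ) * (α' * g' 0) + ((-1):ℝ) * (α' * g' 1) = α' * ((-3) * g' 0 + (-1) * g' 1) := by ring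
            rw [h', mul_zero, F0, F1] at h2
            norm_num at h2
          · have h2 : ((-4):ℝ) * (α' * g' 0) + ((-2):ℝ) * (α' * g' 1) = α' * ((-4) * g' 0 + (-2) * g' 1) := by ring
            rw [h', mul_zero, F0, F1] at h2
            norm_num at h2
          · have h2 : (1:ℝ) * (α' * g' 0) + ((-2):ℝ) * (α' * g' 1) = α' * (1 * g' 0 + (-2) * g' 1) := by ring
            rw [h', mul_zero, F0, F1] at h2
            norm_num at h2
          · have h2 : (2:ℝ) * (α' * g' 0) + ((-3):ℝ) * (α' * g' 1) = α' * (2 * g' 0 + (-3) * g' 1) := by ring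
            rw [h', mul_zero, F0, F1] at h2
            norm_num at h2
          · have h2 : (4:ℝ) * (α' * g' 0) + (4:ℝ) * (α' * g' 1) = α' * (4 * g' 0 + 4 * g' 1) := by ring
            rw [h', mul_zero, F0, F1] at h2
            norm_num at h2
        · have hstrict : y 1 0 < ((36/11):ℝ) := lt_of_le_of_ne hbnd hx
          refine hmax' (((36/11):ℝ) / g 0) ?_ ?_
          · rw [lt_div_iff₀ hg]
            linarith
          · have hpt : (![(0:ℝ),0] : Fin 2 → ℝ) + (((36/11):ℝ) / g 0) • g = ![((36/11):ℝ), (24/11)] := by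
              funext w; fin_cases w
              · show (0:ℝ) + ((36/11):ℝ) / g 0 * g 0 = ((36/11):ℝ)
                rw [zero_add, div_mul_eq_mul_div, div_eq_iff (ne_of_gt hg)]
              · show (0:ℝ) + ((36/11):ℝ) / g 0 * g 1 = ((24/11):ℝ)
                rw [zero_add, div_mul_eq_mul_div, div_eq_iff (ne_of_gt hg)]
                linear_combination ((-12/11):ℝ) * h
            rw [hpt]
            exact (memP_iff _).2 (by norm_num)
    · -- row 5
      have hline : (4:ℝ) * y 1 0 + (4:ℝ) * y 1 1 = 0 := by
        linear_combination (4:ℝ) * Eq0 + (4:ℝ) * Eq1 + α * h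
      rcases lt_trichotomy (g 0) 0 with hg | hg | hg
      · have hsgn : y 1 0 < 0 := by
          rw [Eq0]; exact mul_neg_of_pos_of_neg hα hg
        have hbnd : ((-4):ℝ) ≤ y 1 0 := by linarith
        by_cases hx : y 1 0 = ((-4):ℝ)
        · have hy11 : y 1 1 = (4:ℝ) := by
            rw [hx] at hline; linarith
          have F0 : α' * g' 0 = (5:ℝ) := by rw [hx] at G0; linarith
          have F1 : α' * g' 1 = (3:ℝ) := by rw [hy11] at G1; linarith
          rcases circuit_mem hc' with h' | h' | h' | h' | h' | h'
          · have h2 : (0:ℝ) * (α' * g' 0) + (4:ℝ) * (α' * g' 1) = α' * (0 * g' 0 + 4 * g' 1) := by ring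
            rw [h', mul_zero, F0, F1] at h2
            norm_num at h2
          · have h2 : ((-3):ℝ) * (α' * g' 0) + ((-1):ℝ) * (α' * g' 1) = α' * ((-3) * g' 0 + (-1) * g' 1) := by ring
            rw [h', mul_zero, F0, F1] at h2
            norm_num at h2
          · have h2 : ((-4):ℝ) * (α' * g' 0) + ((-2):ℝ) * (α' * g' 1) = α' * ((-4) * g' 0 + (-2) * g' 1) := by ring
            rw [h', mul_zero, F0, F1] at h2
            norm_num at h2
          · have h2 : (1:ℝ) * (α' * g' 0) + ((-2):ℝ) * (α' * g' 1) = α' * (1 * g' 0 + (-2) * g' 1) := by ring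
            rw [h', mul_zero, F0, F1] at h2
            norm_num at h2
          · have h2 : (2:ℝ) * (α' * g' 0) + ((-3):ℝ) * (α' * g' 1) = α' * (2 * g' 0 + (-3) * g' 1) := by ring
            rw [h', mul_zero, F0, F1] at h2
            norm_num at h2
          · have h2 : (4:ℝ) * (α' * g' 0) + (4:ℝ) * (α' * g' 1) = α' * (4 * g' 0 + 4 * g' 1) := by ring
            rw [h', mul_zero, F0, F1] at h2
            norm_num at h2
        · have hstrict : ((-4):ℝ) < y 1 0 := lt_of_le_of_ne hbnd (Ne.symm hx)
          refine hmax' (((-4):ℝ) / g 0) ?_ ?_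
          · rw [lt_div_iff_of_neg hg]
            linarith
          · have hpt : (![(0:ℝ),0] : Fin 2 → ℝ) + (((-4):ℝ) / g 0) • g = ![((-4):ℝ), 4] := by
              funext w; fin_cases w
              · show (0:ℝ) + ((-4):ℝ) / g 0 * g 0 = ((-4):ℝ)
                rw [zero_add, div_mul_eq_mul_div, div_eq_iff (ne_of_lt hg)]
              · show (0:ℝ) + ((-4):ℝ) / g 0 * g 1 = (4:ℝ)
                rw [zero_add, div_mul_eq_mul_div, div_eq_iff (ne_of_lt hg)]
                linear_combination ((-1):ℝ) * h
            rw [hpt]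
            exact (memP_iff _).2 (by norm_num)
      · exact hgne ⟨hg, by linarith⟩
      · have hsgn : 0 < y 1 0 := by
          rw [Eq0]; exact mul_pos hα hg
        linarith

end CDNS

open CDNS in
/-- Circuit distance is not symmetric: there are a rational matrix `A ∈ ℚ^{m×2}` and
`b ∈ ℚᵐ` such that `P = {x ∈ ℝ² : A x ≥ b}` is a polytope with two vertices `u, v` for which
the minimum length of a circuit walk from `u` to `v` is strictly smaller than the minimum
length of a circuit walk from `v` to `u`. -/
theorem circuit_distance_not_symmetric :
    ∃ (m : ℕ) (A : Matrix (Fin m) (Fin 2) ℚ) (b : Fin m → ℚ),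
      Bornology.IsBounded (polySet (A.map (Rat.cast : ℚ → ℝ)) (fun i => (b i : ℝ))) ∧
      ∃ u v : Fin 2 → ℝ,
        u ∈ Set.extremePoints ℝ (polySet (A.map (Rat.cast : ℚ → ℝ)) (fun i => (b i : ℝ))) ∧
        v ∈ Set.extremePoints ℝ (polySet (A.map (Rat.cast : ℚ → ℝ)) (fun i => (b i : ℝ))) ∧
        ∃ k : ℕ, IsCircuitWalk (A.map (Rat.cast : ℚ → ℝ)) (fun i => (b i : ℝ)) k u v ∧
          ∀ j : ℕ, IsCircuitWalk (A.map (Rat.cast : ℚ → ℝ)) (fun i => (b i : ℝ)) j v u →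
            k < j := by
  refine ⟨6, Aq, bq, ?_, ![(1:ℝ),7], ![(0:ℝ),0], ?_, ?_, 2, ?_, ?_⟩
  · show Bornology.IsBounded (polySet AR bR)
    exact boundedP
  · show (![(1:ℝ),7] : Fin 2 → ℝ) ∈ Set.extremePoints ℝ (polySet AR bR)
    exact u_ext
  · show (![(0:ℝ),0] : Fin 2 → ℝ) ∈ Set.extremePoints ℝ (polySet AR bR)
    exact v_ext
  · show IsCircuitWalk AR bR 2 ![(1:ℝ),7] ![(0:ℝ),0]
    exact walk_fwd
  · intro j hw
    exact reverse_long j hw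
end
end

section
/- Let A ∈ ℚ^{m×n}, b ∈ ℝᵐ, and P = {x ∈ ℝⁿ : Ax ≥ b}. If u and v are distinct vertices of P such that the segment [u,v] is an edge (a 1-dimensional face) of P, then the vector v − u is a circuit of A, i.e. the support of A(v−u) is minimal with respect to inclusion among the supports of Aw over all nonzero w ∈ ℝⁿ. -/
open Matrix

noncomputable section

/-- `F` is a face of `P` of dimension `d`: a nonempty convex extreme subset of `P`
whose affine span has dimension `d`. -/
def IsFaceOfDim {n : ℕ} (P F : Set (Fin n → ℝ)) (d : ℕ) : Prop :=
  F.Nonempty ∧ Convex ℝ F ∧ IsExtreme ℝ P F ∧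
    Module.finrank ℝ (affineSpan ℝ F).direction = d

/-- An edge walk of length `k` between vertices `u` and `v` of `P`: a sequence of vertices
`u = y⁰, …, yᵏ = v` such that each segment `[yⁱ, y^{i+1}]` is an edge (1-dimensional face)
of `P`. -/
def IsEdgeWalk {n : ℕ} (P : Set (Fin n → ℝ)) (k : ℕ) (u v : Fin n → ℝ) : Prop :=
  ∃ y : Fin (k + 1) → (Fin n → ℝ),
    y 0 = u ∧ y (Fin.last k) = v ∧ (∀ i, y i ∈ Set.extremePoints ℝ P) ∧
    ∀ i : Fin k, IsFaceOfDim P (segment ℝ (y i.castSucc) (y i.succ)) 1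

/-- If `u` and `v` are distinct vertices of `P = {x : A x ≥ b}` (with `A` rational) such that
the segment `[u, v]` is an edge (1-dimensional face) of `P`, then `v - u` is a circuit of `A`. -/
theorem edge_direction_is_circuit {m n : ℕ} (A : Matrix (Fin m) (Fin n) ℚ) (b : Fin m → ℝ)
    (u v : Fin n → ℝ) (huv : u ≠ v)
    (hu : u ∈ Set.extremePoints ℝ (polySet (A.map (Rat.cast : ℚ → ℝ)) b))
    (hv : v ∈ Set.extremePoints ℝ (polySet (A.map (Rat.cast : ℚ → ℝ)) b))
    (hedge : IsFaceOfDim (polySet (A.map (Rat.cast : ℚ → ℝ)) b) (segment ℝ u v) 1) :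
    IsCircuit (A.map (Rat.cast : ℚ → ℝ)) (v - u) := by
  classical
  set M := A.map (Rat.cast : ℚ → ℝ) with hM
  have hext : IsExtreme ℝ (polySet M b) (segment ℝ u v) := hedge.2.2.1
  have hsegP : segment ℝ u v ⊆ polySet M b := hext.1
  have hgne : v - u ≠ 0 := sub_ne_zero_of_ne (Ne.symm huv)
  refine ⟨hgne, ?_⟩
  intro w hw hsub
  have hzero : ∀ i, M.mulVec (v - u) i = 0 → M.mulVec w i = 0 := by
    intro i h
    by_contra hne
    exact hsub hne h
  set x₀ : Fin n → ℝ := (1/2 : ℝ) • u + (1/2 : ℝ) • v with hx₀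
  have hx₀seg : x₀ ∈ segment ℝ u v :=
    ⟨1/2, 1/2, by norm_num, by norm_num, by norm_num, rfl⟩
  have hx₀P : x₀ ∈ polySet M b := hsegP hx₀seg
  have huP : u ∈ polySet M b := hsegP (left_mem_segment ℝ u v)
  have hvP : v ∈ polySet M b := hsegP (right_mem_segment ℝ u v)
  have hxlin : ∀ i, M.mulVec x₀ i = (1/2) * M.mulVec u i + (1/2) * M.mulVec v i := by
    intro i
    rw [hx₀, Matrix.mulVec_add, Matrix.mulVec_smul, Matrix.mulVec_smul]
    simp
  have hgap : ∀ i, M.mulVec (v - u) i ≠ 0 → b i < M.mulVec x₀ i := by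
    intro i h
    have h1 : b i ≤ M.mulVec u i := huP i
    have h2 : b i ≤ M.mulVec v i := hvP i
    have hne : M.mulVec u i ≠ M.mulVec v i := by
      intro he
      apply h
      rw [Matrix.mulVec_sub, Pi.sub_apply, he, sub_self]
    rcases lt_or_gt_of_ne hne with h3 | h3 <;> (rw [hxlin i]; linarith)
  by_cases hSne : (Finset.univ.filter (fun i => M.mulVec (v - u) i ≠ 0)).Nonempty
  · set S := Finset.univ.filter (fun i => M.mulVec (v - u) i ≠ 0) with hS
    set δ : Fin m → ℝ := fun i => (M.mulVec x₀ i - b i) / (|M.mulVec w i| + 1) with hδ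
    set ε := min 1 (S.inf' hSne δ) with hε
    have hεpos : 0 < ε := by
      refine lt_min one_pos ?_
      rw [Finset.lt_inf'_iff]
      intro i hi
      have hgi : M.mulVec (v - u) i ≠ 0 := by
        simpa [hS] using hi
      have := hgap i hgi
      exact div_pos (by linarith) (by positivity)
    have hkey : ∀ s : ℝ, |s| ≤ ε → x₀ + s • w ∈ polySet M b := by
      intro s hs i
      have hlin : M.mulVec (x₀ + s • w) i = M.mulVec x₀ i + s * M.mulVec w i := by
        rw [Matrix.mulVec_add, Matrix.mulVec_smul]
        simp
      rw [hlin]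
      by_cases hi : M.mulVec (v - u) i = 0
      · rw [hzero i hi, mul_zero, add_zero]
        exact hx₀P i
      · have hgapi := hgap i hi
        have hεδ : ε ≤ δ i :=
          le_trans (min_le_right _ _) (Finset.inf'_le δ (by simp [hS, hi]))
        have hδeq : δ i * (|M.mulVec w i| + 1) = M.mulVec x₀ i - b i := by
          rw [hδ]
          exact div_mul_cancel₀ _ (by positivity)
        have habs : |s * M.mulVec w i| ≤ M.mulVec x₀ i - b i := by
          rw [abs_mul]
          have h0 : (0:ℝ) ≤ |M.mulVec w i| := abs_nonneg _
          have h1 : |s| * |M.mulVec w i| ≤ ε * (|M.mulVec w i| + 1) := by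
            nlinarith
          have h2 : ε * (|M.mulVec w i| + 1) ≤ δ i * (|M.mulVec w i| + 1) := by
            nlinarith
          linarith [hδeq ▸ h2]
        have := (abs_le.mp habs).1
        linarith
    have hplus : x₀ + ε • w ∈ polySet M b := hkey ε (by rw [abs_of_pos hεpos])
    have hminus : x₀ + (-ε) • w ∈ polySet M b :=
      hkey (-ε) (by rw [abs_neg, abs_of_pos hεpos])
    have hopen : x₀ ∈ openSegment ℝ (x₀ + (-ε) • w) (x₀ + ε • w) :=
      ⟨1/2, 1/2, by norm_num, by norm_num, by norm_num, by module⟩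
    obtain ⟨a, c, ha, hc, hac, heq⟩ := hext.right_mem_of_mem_openSegment hminus hplus hx₀seg hopen
    have ha' : a = 1 - c := by linarith
    rw [ha', hx₀] at heq
    have hεw : ε • w = (c - 1/2 : ℝ) • (v - u) := by
      linear_combination (norm := module) -heq
    have hwg : w = ((c - 1/2) / ε) • (v - u) := by
      rw [div_eq_inv_mul, ← smul_smul, ← hεw, smul_smul, inv_mul_cancel₀ hεpos.ne', one_smul]
    have hlam : (c - 1/2) / ε ≠ 0 := by
      intro h0
      apply hw
      rw [hwg, h0, zero_smul]
    ext i
    simp only [Set.mem_setOf_eq, hwg, Matrix.mulVec_smul, Pi.smul_apply, smul_eq_mul,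
      mul_ne_zero_iff]
    exact ⟨fun h => h.2, fun h => ⟨hlam, h⟩⟩
  · have hall : ∀ i, M.mulVec (v - u) i = 0 := by
      intro i
      by_contra h
      exact hSne ⟨i, by simp [h]⟩
    ext i
    simp [hall i, hzero i (hall i)]
end
end
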